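/- Let d ≥ 1, let f = (0, f_0, …, f_{d−1}) be a vector of nonnegative integers, and let n ≥ 1. Define sequences (a_0,…,a_{d−1}) and (b_0,…,b_{d−1}) by a_{d−1} := f_{d−1}, b_{d−1} := 0, and for k = d−1, d−2, …, 1: a_{k−1} := max(∂_{k+1}(a_k), f_{k−1} + ∂_{k+1}(b_k)) and b_{k−1} := max(∂_{k+1}(b_k), ∂_{k+1}(a_k) − f_{k−1}) (subtraction taken in ℤ; the maxima are nonnegative). Then there exists a proper relative simplicial complex Ψ on ground set [n] with f_k(Ψ) = f_k for 0 ≤ k ≤ d−1 and f_k(Ψ) = 0 for all other k, if and only if a_0 ≤ n. -/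

import Mathlib

open Finset

/-- `IsCascadeRep k r t c` says that `r = ∑_{i=t}^{k} C(c i, i)` is the `k`-th binomial
(cascade/Macaulay) representation of `r`, i.e. `c k > c (k-1) > ⋯ > c t ≥ t ≥ 1`. -/
def IsCascadeRep (k r t : ℕ) (c : ℕ → ℕ) : Prop :=
  1 ≤ t ∧ t ≤ k ∧ (∀ i, t ≤ i → i < k → c i < c (i + 1)) ∧ t ≤ c t ∧
    r = ∑ i ∈ Finset.Icc t k, (c i).choose i

/-- The value `∑_{i=t}^{k} g (c i) i` computed from the (unique) `k`-th cascade
representation of `r`; by convention `0` if no representation exists (e.g. `r = 0`). -/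
noncomputable def cascadeVal (g : ℕ → ℕ → ℕ) (k r : ℕ) : ℕ :=
  sInf {s | ∃ t c, IsCascadeRep k r t c ∧ s = ∑ i ∈ Finset.Icc t k, g (c i) i}

/-- `∂_k(r) = C(r_k, k-1) + ⋯ + C(r_t, t-1)`, with `∂_k(0) = 0`. -/
noncomputable def partialShadow (k r : ℕ) : ℕ :=
  cascadeVal (fun m i => m.choose (i - 1)) k r

/-- `∂̃_k(r) = C(r_k - 1, k-1) + ⋯ + C(r_t - 1, t-1)`, with `∂̃_k(0) = 0`. -/
noncomputable def partialShadowTilde (k r : ℕ) : ℕ :=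
  cascadeVal (fun m i => (m - 1).choose (i - 1)) k r

/-- `r^⟨k⟩ = C(r_k + 1, k+1) + ⋯ + C(r_t + 1, t+1)`, with `0^⟨k⟩ = 0`. -/
noncomputable def upperShadow (k r : ℕ) : ℕ :=
  cascadeVal (fun m i => (m + 1).choose (i + 1)) k r

/-- A simplicial complex on the ground set `[n] = {1,…,n}`:
a collection of subsets of `[n]` closed under taking subsets. -/
def SimplicialOn (n : ℕ) (Δ : Set (Finset ℕ)) : Prop :=
  (∀ σ ∈ Δ, σ ⊆ Finset.Icc 1 n) ∧ ∀ σ ∈ Δ, ∀ τ, τ ⊆ σ → τ ∈ Δ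

/-- The number of faces of `Δ` of cardinality `c` (so `faceCount Δ (k+1) = f_k(Δ)`). -/
noncomputable def faceCount (Δ : Set (Finset ℕ)) (c : ℕ) : ℕ :=
  Set.ncard {σ ∈ Δ | σ.card = c}

/-- The number of faces of the relative complex `Δ \ Γ` of cardinality `c`. -/
noncomputable def relFaceCount (Δ Γ : Set (Finset ℕ)) (c : ℕ) : ℕ :=
  Set.ncard {σ | σ ∈ Δ ∧ σ ∉ Γ ∧ σ.card = c}

/-- `Δ` is compressed on ground set `[n]`: for each cardinality, its faces of that
cardinality form an initial segment of the reverse lexicographic (colex) order. -/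
def IsCompressed (n : ℕ) (Δ : Set (Finset ℕ)) : Prop :=
  ∀ σ τ : Finset ℕ, σ ⊆ Finset.Icc 1 n → τ ∈ Δ → σ.card = τ.card →
    toColex σ ≤ toColex τ → σ ∈ Δ

/-- A multicomplex on `[n]`: a collection of finite multisets with elements in `[n]`,
closed under taking multisubsets. -/
def MulticomplexOn (n : ℕ) (Δ : Set (Multiset ℕ)) : Prop :=
  (∀ F ∈ Δ, ∀ x ∈ F, x ∈ Finset.Icc 1 n) ∧ ∀ F ∈ Δ, ∀ G, G ≤ F → G ∈ Δ

/-- The number of multisets in `Δ` of cardinality `c`. -/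
noncomputable def mFaceCount (Δ : Set (Multiset ℕ)) (c : ℕ) : ℕ :=
  Set.ncard {F ∈ Δ | Multiset.card F = c}

/-- Strict reverse lexicographic comparison of multisets (intended for multisets of
equal cardinality): writing each as a weakly increasing sequence, `F < G` iff at the
largest position where they differ, `F` has the smaller entry. -/
def MRevLexLT (F G : Multiset ℕ) : Prop :=
  List.Lex (· < ·) (Multiset.sort F (· ≤ ·)).reverse (Multiset.sort G (· ≤ ·)).reverse

/-- A compressed multicomplex on `[n]`: each cardinality layer is an initial segment of
the reverse lexicographic order on multisets of that cardinality with entries in `[n]`. -/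
def IsCompressedMulti (n : ℕ) (Δ : Set (Multiset ℕ)) : Prop :=
  ∀ F G : Multiset ℕ, (∀ x ∈ F, x ∈ Finset.Icc 1 n) → G ∈ Δ →
    Multiset.card F = Multiset.card G → (F = G ∨ MRevLexLT F G) → F ∈ Δ

/-- `Ψ_{j+1} \ Ψ_j` for the relative complex `Δ \ Γ` and the list `L` of facets:
the faces of `Δ \ Γ` contained in the `j`-th facet but in no earlier one. -/
def shellStep (Δ Γ : Set (Finset ℕ)) (L : List (Finset ℕ)) (j : ℕ) : Set (Finset ℕ) :=
  {τ | τ ∈ Δ ∧ τ ∉ Γ ∧ τ ⊆ L.getD j ∅ ∧ ∀ i < j, ¬ τ ⊆ L.getD i ∅}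

/-- `L` is a shelling order of the relative simplicial complex `Δ \ Γ`:
it enumerates the inclusion-maximal faces of `Δ \ Γ` without repetition, and at every
step the newly added faces have a unique inclusion-minimal element (equivalently, a
minimum, as the family is finite). -/
def IsShelling (Δ Γ : Set (Finset ℕ)) (L : List (Finset ℕ)) : Prop :=
  L.Nodup ∧
  (∀ σ : Finset ℕ,
    (σ ∈ Δ ∧ σ ∉ Γ ∧ ∀ τ, τ ∈ Δ → τ ∉ Γ → σ ⊆ τ → σ = τ) ↔ σ ∈ L) ∧
  ∀ j < L.length, ∃ R, R ∈ shellStep Δ Γ L j ∧ ∀ τ ∈ shellStep Δ Γ L j, R ⊆ τ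

/-- The map `Φ_d` sending a multiset `F = {b_1 ≤ … ≤ b_k}` (with `k ≤ d`) to the
`d`-set `{1,…,d−k} ∪ {b_1 + d−k+1, …, b_k + d}`. -/
def PhiBFS (d : ℕ) (F : Multiset ℕ) : Finset ℕ :=
  Finset.Icc 1 (d - Multiset.card F) ∪
    (Finset.univ : Finset (Fin (Multiset.card F))).image
      (fun i : Fin (Multiset.card F) =>
        (Multiset.sort F (· ≤ ·)).getD (i : ℕ) 0 + (d - Multiset.card F) + 1 + (i : ℕ))

/-!
By Kruskal–Katona, the face numbers of a simplicial complex satisfy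
`∂_{k+1}(f_k) ≤ f_{k-1}`. If `Δ \ Γ` has face numbers `f`, then `f_k(Δ) = f_k + f_k(Γ)`, and a
descending induction on `k` using these inequalities for `Δ` and `Γ` gives `a_k ≤ f_k(Δ)` and
`b_k ≤ f_k(Γ)`; in particular `a_0 ≤ f_0(Δ) ≤ n`. Conversely, `a_k = f_k + b_k` and both `a` and
`b` satisfy the Kruskal–Katona inequalities, so the compressed complexes whose `k`-faces are the
first `a_k`, resp. `b_k`, many `(k+1)`-subsets of `[n]` in colex order are nested and realise `f`.

The numerical `∂_k(r)` is matched with the size of the shadow of the colex initial segment of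
size `r` by writing that segment down explicitly from the cascade representation of `r`.
-/

open scoped FinsetFamily

lemma lt_choose_add (r : ℕ) {k : ℕ} (hk : 1 ≤ k) : r < (r + k).choose k := by
  obtain ⟨k, rfl⟩ := Nat.exists_eq_add_of_le' hk
  induction r with
  | zero => simp
  | succ r ih =>
    rw [show r + 1 + (k + 1) = (r + (k + 1)) + 1 by omega, Nat.choose_succ_succ']
    have := Nat.choose_pos (show k ≤ r + (k + 1) by omega)
    omega

lemma exists_choose_le_lt_choose_succ {k r : ℕ} (hk : 1 ≤ k) (hr : r ≠ 0) :
    ∃ m, k ≤ m ∧ m.choose k ≤ r ∧ r < (m + 1).choose k := by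
  classical
  have hex : ∃ m, r < (m + 1).choose k := ⟨r + k - 1, by
    rw [Nat.sub_add_cancel (by omega)]; exact lt_choose_add r hk⟩
  set m := Nat.find hex
  have hkm : k ≤ m := by
    by_contra! h
    have := Nat.find_spec hex
    rcases (show m + 1 < k ∨ m + 1 = k by omega) with h' | h'
    · rw [Nat.choose_eq_zero_of_lt h'] at this; omega
    · rw [h', Nat.choose_self] at this; omega
  refine ⟨m, hkm, ?_, Nat.find_spec hex⟩
  have := Nat.find_min hex (show m - 1 < m by omega)
  rwa [Nat.sub_add_cancel (by omega), not_lt] at this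

namespace IsCascadeRep

variable {k r t : ℕ} {c : ℕ → ℕ}

lemma choose_le (h : IsCascadeRep k r t c) {i : ℕ} (hi : i ∈ Icc t k) : (c i).choose i ≤ r :=
  h.2.2.2.2 ▸ single_le_sum (f := fun i => (c i).choose i) (fun _ _ => Nat.zero_le _) hi

lemma ne_zero (h : IsCascadeRep k r t c) : r ≠ 0 :=
  (Nat.choose_pos h.2.2.2.1).trans_le (h.choose_le (mem_Icc.2 ⟨le_rfl, h.2.1⟩)) |>.ne'

lemma update_succ (h : IsCascadeRep k r t c) {m : ℕ} (hkm : k + 1 ≤ m) (hcm : c k < m) :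
    IsCascadeRep (k + 1) (m.choose (k + 1) + r) t (Function.update c (k + 1) m) := by
  obtain ⟨ht, htk, hc, hct, rfl⟩ := h
  refine ⟨ht, by omega, fun i hti hik => ?_, ?_, ?_⟩
  · rw [Function.update_of_ne (by omega)]
    rcases Nat.lt_or_ge i k with hik' | hik'
    · rw [Function.update_of_ne (by omega)]; exact hc i hti hik'
    · obtain rfl : i = k := by omega
      simpa using hcm
  · rwa [Function.update_of_ne (by omega)]
  · rw [sum_Icc_succ_top (by omega), Function.update_self, add_comm]
    congr 1
    exact sum_congr rfl fun i hi => by rw [Function.update_of_ne (by simp at hi; omega)]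

end IsCascadeRep

lemma exists_isCascadeRep {k r : ℕ} (hk : 1 ≤ k) (hr : r ≠ 0) : ∃ t c, IsCascadeRep k r t c := by
  induction k generalizing r with
  | zero => omega
  | succ k ih =>
    obtain ⟨m, hkm, hle, hlt⟩ := exists_choose_le_lt_choose_succ hk hr
    by_cases heq : r = m.choose (k + 1)
    · exact ⟨k + 1, fun _ => m, hk, le_rfl, by omega, hkm, by simp [heq]⟩
    -- the greedy remainder is smaller than `C(m, k)`, so it has a representation below `m`
    rw [Nat.choose_succ_succ'] at hlt
    have hk1 : 1 ≤ k := by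
      by_contra! h0
      obtain rfl : k = 0 := by omega
      simp only [zero_add, Nat.choose_one_right, Nat.choose_zero_right] at hle hlt heq
      omega
    obtain ⟨t, c, hrep⟩ := ih hk1 (show r - m.choose (k + 1) ≠ 0 by omega)
    have hcm : c k < m := by
      by_contra! h
      have := hrep.choose_le (mem_Icc.2 ⟨hrep.2.1, le_rfl⟩)
      have := Nat.choose_le_choose k h
      omega
    exact ⟨t, _, Nat.add_sub_of_le hle ▸ hrep.update_succ hkm hcm⟩

structure IsCascade (k t : ℕ) (c : ℕ → ℕ) : Prop where
  one_le : 1 ≤ t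
  le : t ≤ k
  strictMonoOn : StrictMonoOn c (Set.Icc t k)
  le_apply_bot : t ≤ c t

lemma IsCascadeRep.isCascade {k r t : ℕ} {c : ℕ → ℕ} (h : IsCascadeRep k r t c) :
    IsCascade k t c :=
  ⟨h.1, h.2.1, strictMonoOn_of_lt_add_one Set.ordConnected_Icc fun i _ hi hi1 =>
    h.2.2.1 i hi.1 (by simp only [Set.mem_Icc] at hi1; omega), h.2.2.2.1⟩

namespace IsCascade

variable {k t : ℕ} {c : ℕ → ℕ} (h : IsCascade k t c)
include h

lemma lt {i j : ℕ} (hti : t ≤ i) (hij : i < j) (hjk : j ≤ k) : c i < c j :=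
  h.strictMonoOn ⟨hti, by omega⟩ ⟨by omega, hjk⟩ hij

lemma le_apply {i : ℕ} (hti : t ≤ i) (hik : i ≤ k) : i ≤ c i := by
  obtain ⟨d, rfl⟩ := Nat.exists_eq_add_of_le hti
  induction d with
  | zero => exact h.le_apply_bot
  | succ d ih =>
    rw [← add_assoc] at hik ⊢
    have := h.lt (le_add_right le_rfl) (lt_add_one (t + d)) hik
    have := ih (le_add_right le_rfl) (by omega)
    omega

lemma of_le {k' : ℕ} (htk' : t ≤ k') (hk' : k' ≤ k) : IsCascade k' t c :=
  ⟨h.one_le, htk', h.strictMonoOn.mono (Set.Icc_subset_Icc_right hk'), h.le_apply_bot⟩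

end IsCascade

def cascadeTail (c : ℕ → ℕ) (k i : ℕ) : Finset ℕ := (Ioc i k).image c

/-- For a cascade representation `r = ∑_{i=t}^k C(c i, i)`, `cascadeFamily c t k 0` is the set
of the first `r` many `k`-subsets of `ℕ` in colex order: its `i`-th block consists of an
`i`-subset of `range (c i)` topped by `c (i+1), …, c k`. `cascadeFamily c t k 1` is its shadow. -/
def cascadeFamily (c : ℕ → ℕ) (t k e : ℕ) : Finset (Finset ℕ) :=
  (Icc t k).biUnion fun i => (powersetCard (i - e) (range (c i))).image (· ∪ cascadeTail c k i)

section CascadeFamily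

variable {c : ℕ → ℕ} {t k e i : ℕ} {τ σ ρ : Finset ℕ}

lemma mem_cascadeTail {x : ℕ} : x ∈ cascadeTail c k i ↔ ∃ j, i < j ∧ j ≤ k ∧ c j = x := by
  simp [cascadeTail, and_assoc]

lemma cascadeTail_self : cascadeTail c k k = ∅ := by simp [cascadeTail]

lemma cascadeTail_succ (hik : i ≤ k) :
    cascadeTail c (k + 1) i = insert (c (k + 1)) (cascadeTail c k i) := by
  rw [cascadeTail, cascadeTail, ← image_insert]
  congr 1
  ext j
  simp only [mem_Ioc, mem_insert]
  omega

lemma cascadeTail_eq_insert {j : ℕ} (hij : i < j) (hjk : j ≤ k) :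
    cascadeTail c k i = insert (c j) ((Ioo i j).image c ∪ cascadeTail c k j) := by
  rw [cascadeTail, cascadeTail, ← image_union, ← image_insert]
  congr 1
  ext l
  simp only [mem_Ioc, mem_insert, mem_union, mem_Ioo]
  omega

lemma mem_cascadeFamily : σ ∈ cascadeFamily c t k e ↔
    ∃ i, t ≤ i ∧ i ≤ k ∧ ∃ τ ⊆ range (c i), #τ = i - e ∧ τ ∪ cascadeTail c k i = σ := by
  simp [cascadeFamily, and_assoc]

lemma IsCascade.lt_of_mem_cascadeTail (h : IsCascade k t c) (hti : t ≤ i) {x : ℕ}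
    (hx : x ∈ cascadeTail c k i) : c i < x := by
  obtain ⟨j, hij, hjk, rfl⟩ := mem_cascadeTail.1 hx
  exact h.lt hti hij hjk

lemma IsCascade.notMem_cascadeTail (h : IsCascade k t c) (hti : t ≤ i) {x : ℕ}
    (hx : x < c i) : x ∉ cascadeTail c k i :=
  fun hx' => (h.lt_of_mem_cascadeTail hti hx').not_gt hx

lemma IsCascade.disjoint_cascadeTail (h : IsCascade k t c) (hti : t ≤ i)
    (hτ : τ ⊆ range (c i)) : Disjoint τ (cascadeTail c k i) :=
  disjoint_left.2 fun _ hx => h.notMem_cascadeTail hti (mem_range.1 (hτ hx))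

lemma IsCascade.card_cascadeTail (h : IsCascade k t c) (hti : t ≤ i) :
    #(cascadeTail c k i) = k - i := by
  rw [cascadeTail, card_image_of_injOn, Nat.card_Ioc]
  exact h.strictMonoOn.injOn.mono fun j hj => by
    simp only [coe_Ioc, Set.mem_Ioc] at hj; exact ⟨by omega, hj.2⟩

lemma IsCascade.card_union_cascadeTail (h : IsCascade k t c) (hti : t ≤ i)
    (hτ : τ ⊆ range (c i)) : #(τ ∪ cascadeTail c k i) = #τ + (k - i) := by
  rw [card_union_of_disjoint (h.disjoint_cascadeTail hti hτ), h.card_cascadeTail hti]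

lemma IsCascade.card_of_mem_cascadeFamily (h : IsCascade k t c) (he : e ≤ 1)
    (hσ : σ ∈ cascadeFamily c t k e) : #σ = k - e := by
  obtain ⟨i, hti, hik, τ, hτ, hcard, rfl⟩ := mem_cascadeFamily.1 hσ
  have := h.one_le
  rw [h.card_union_cascadeTail hti hτ, hcard]
  omega

lemma IsCascade.le_of_mem_cascadeFamily (h : IsCascade k t c) (hσ : σ ∈ cascadeFamily c t k e)
    {x : ℕ} (hx : x ∈ σ) : x ≤ c k := by
  obtain ⟨i, hti, hik, τ, hτ, -, rfl⟩ := mem_cascadeFamily.1 hσ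
  rcases mem_union.1 hx with hx | hx
  · have := mem_range.1 (hτ hx)
    have := h.strictMonoOn.monotoneOn ⟨hti, hik⟩ ⟨h.le, le_rfl⟩ hik
    omega
  · obtain ⟨j, hij, hjk, rfl⟩ := mem_cascadeTail.1 hx
    exact h.strictMonoOn.monotoneOn ⟨by omega, hjk⟩ ⟨h.le, le_rfl⟩ hjk

lemma IsCascade.card_cascadeFamily (h : IsCascade k t c) :
    #(cascadeFamily c t k e) = ∑ i ∈ Icc t k, (c i).choose (i - e) := by
  rw [cascadeFamily, card_biUnion]
  · refine sum_congr rfl fun i hi => ?_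
    have hti := (mem_Icc.1 hi).1
    rw [card_image_of_injOn, card_powersetCard, card_range]
    intro τ hτ τ' hτ' hττ'
    have := congrArg (· \ cascadeTail c k i) hττ'
    simp only [mem_coe, mem_powersetCard] at hτ hτ'
    simpa [union_sdiff_cancel_right (h.disjoint_cascadeTail hti hτ.1),
      union_sdiff_cancel_right (h.disjoint_cascadeTail hti hτ'.1)] using this
  · -- a set of block `i` contains `c j` for every later block `j`, while those of block `j` do not
    suffices key : ∀ i j, t ≤ i → i < j → j ≤ k → ∀ τ ⊆ range (c i), ∀ τ' ⊆ range (c j),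
        τ ∪ cascadeTail c k i ≠ τ' ∪ cascadeTail c k j by
      intro i hi j hj hij
      simp only [coe_Icc, Set.mem_Icc] at hi hj
      rw [Function.onFun, disjoint_left]
      simp only [mem_image, mem_powersetCard, not_exists, not_and]
      rintro _ ⟨τ, ⟨hτ, -⟩, rfl⟩ τ' ⟨hτ', -⟩
      rcases Nat.lt_or_gt_of_ne hij with hlt | hlt
      · exact (key i j hi.1 hlt hj.2 τ hτ τ' hτ').symm
      · exact key j i hj.1 hlt hi.2 τ' hτ' τ hτ
    intro i j hti hij hjk τ _ τ' hτ' heq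
    have hj : c j ∈ τ ∪ cascadeTail c k i :=
      mem_union_right _ (mem_cascadeTail.2 ⟨j, hij, hjk, rfl⟩)
    rw [heq, mem_union] at hj
    rcases hj with hj | hj
    · exact (mem_range.1 (hτ' hj)).false
    · exact lt_irrefl _ (h.lt_of_mem_cascadeTail (by omega) hj)

end CascadeFamily

section InitSeg

open Finset.Colex

variable {c : ℕ → ℕ} {t k e : ℕ} {σ ρ : Finset ℕ}

lemma IsCascade.mem_cascadeFamily_of_subset_range (h : IsCascade k t c) (hρ : #ρ = k - e)
    (hsub : ρ ⊆ range (c k)) : ρ ∈ cascadeFamily c t k e :=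
  mem_cascadeFamily.2 ⟨k, h.le, le_rfl, ρ, hsub, hρ, by rw [cascadeTail_self, union_empty]⟩

lemma insert_mem_cascadeFamily_succ (hρ : ρ ∈ cascadeFamily c t k e) :
    insert (c (k + 1)) ρ ∈ cascadeFamily c t (k + 1) e := by
  obtain ⟨i, hti, hik, τ, hτ, hcard, rfl⟩ := mem_cascadeFamily.1 hρ
  refine mem_cascadeFamily.2 ⟨i, hti, by omega, τ, hτ, hcard, ?_⟩
  rw [cascadeTail_succ hik, union_insert]

lemma IsCascade.erase_mem_cascadeFamily (h : IsCascade (k + 1) t c)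
    (hσ : σ ∈ cascadeFamily c t (k + 1) e) (hmem : c (k + 1) ∈ σ) :
    σ.erase (c (k + 1)) ∈ cascadeFamily c t k e := by
  obtain ⟨i, hti, hik, τ, hτ, hcard, rfl⟩ := mem_cascadeFamily.1 hσ
  have hτtop : c (k + 1) ∉ τ := fun hx =>
    (mem_range.1 (hτ hx)).not_ge (h.strictMonoOn.monotoneOn ⟨hti, hik⟩ ⟨h.le, le_rfl⟩ hik)
  rcases hik.lt_or_eq with hik | rfl
  · refine mem_cascadeFamily.2 ⟨i, hti, by omega, τ, hτ, hcard, ?_⟩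
    have htail : c (k + 1) ∉ cascadeTail c k i := fun hx => by
      obtain ⟨j, hij, hjk, hj⟩ := mem_cascadeTail.1 hx
      exact (h.lt (by omega) (Nat.lt_succ_of_le hjk) le_rfl).ne hj
    rw [cascadeTail_succ (by omega), union_insert, erase_insert (by simp [hτtop, htail])]
  · rw [cascadeTail_self, union_empty] at hmem
    exact absurd hmem hτtop

lemma IsCascade.mem_cascadeFamily_of_toColex_le (h : IsCascade k t c)
    (hσ : σ ∈ cascadeFamily c t k e) (hρ : #ρ = k - e) (hle : toColex ρ ≤ toColex σ) :
    ρ ∈ cascadeFamily c t k e := by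
  induction k generalizing σ ρ with
  | zero => exact absurd (h.one_le.trans h.le) (by omega)
  | succ k ih =>
    by_cases hsub : ρ ⊆ range (c (k + 1))
    · exact h.mem_cascadeFamily_of_subset_range hρ hsub
    -- otherwise `ρ`, and then also `σ`, contains the top value `c (k + 1)`: remove it
    have hρtop : c (k + 1) ∈ ρ := by
      obtain ⟨x, hxρ, hx⟩ := not_subset.1 hsub
      have := forall_le_mono hle (fun _ => h.le_of_mem_cascadeFamily hσ) x hxρ
      rwa [← le_antisymm this (by simpa using hx)]
    have hσtop : c (k + 1) ∈ σ := by
      by_contra hσtop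
      refine lt_irrefl _ (forall_lt_mono hle (fun x hx => ?_) _ hρtop)
      exact (h.le_of_mem_cascadeFamily hσ hx).lt_of_ne (by rintro rfl; exact hσtop hx)
    have hσ' := h.erase_mem_cascadeFamily hσ hσtop
    have htk : t ≤ k := by
      obtain ⟨i, hti, hik, -⟩ := mem_cascadeFamily.1 hσ'
      omega
    have hle' : toColex (ρ.erase (c (k + 1))) ≤ toColex (σ.erase (c (k + 1))) := by
      rw [← sdiff_singleton_eq_erase, ← sdiff_singleton_eq_erase]
      exact (toColex_sdiff_le_toColex_sdiff (singleton_subset_iff.2 hρtop)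
        (singleton_subset_iff.2 hσtop)).2 hle
    have hρ' := ih (h.of_le htk k.le_succ) hσ' (by rw [card_erase_of_mem hρtop, hρ]; omega) hle'
    simpa [insert_erase hρtop] using insert_mem_cascadeFamily_succ hρ'

lemma IsCascade.isInitSeg_cascadeFamily (h : IsCascade k t c) (he : e ≤ 1) :
    IsInitSeg (cascadeFamily c t k e) (k - e) :=
  ⟨fun _ hσ => h.card_of_mem_cascadeFamily he hσ,
    fun _ _ hσ hρ => h.mem_cascadeFamily_of_toColex_le hσ hρ.2 hρ.1.le⟩

end InitSeg

section Shadow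

variable {c : ℕ → ℕ} {t k i : ℕ} {τ ρ : Finset ℕ}

lemma IsCascade.erase_mem_cascadeFamily_one (h : IsCascade k t c) (hti : t ≤ i) (hik : i ≤ k)
    (hτ : τ ⊆ range (c i)) (hcard : #τ = i) {x : ℕ} (hx : x ∈ τ) :
    (τ ∪ cascadeTail c k i).erase x ∈ cascadeFamily c t k 1 := by
  refine mem_cascadeFamily.2 ⟨i, hti, hik, τ.erase x, (erase_subset x τ).trans hτ,
    by rw [card_erase_of_mem hx, hcard], ?_⟩
  rw [erase_union_distrib, erase_eq_self.2 (h.notMem_cascadeTail hti (mem_range.1 (hτ hx)))]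

/-- Removing the tail value `c j` moves the set from block `i` to block `j`, whose free part
absorbs `c (i+1), …, c (j-1)`. -/
lemma IsCascade.erase_apply_mem_cascadeFamily_one (h : IsCascade k t c) (hti : t ≤ i)
    (hτ : τ ⊆ range (c i)) (hcard : #τ = i) {j : ℕ} (hij : i < j) (hjk : j ≤ k) :
    (τ ∪ cascadeTail c k i).erase (c j) ∈ cascadeFamily c t k 1 := by
  have hτlt : ∀ x ∈ τ, x < c i := fun x hx => mem_range.1 (hτ hx)
  have hfree : τ ∪ (Ioo i j).image c ⊆ range (c j) := by
    refine union_subset (fun x hx => mem_range.2 ((hτlt x hx).trans (h.lt hti hij hjk))) ?_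
    simp only [subset_iff, mem_image, mem_Ioo, mem_range]
    rintro _ ⟨l, ⟨hil, hlj⟩, rfl⟩
    exact h.lt (by omega) hlj hjk
  have hcj : c j ∉ τ ∪ (Ioo i j).image c ∪ cascadeTail c k j := fun hx =>
    (mem_union.1 hx).elim (fun hx => lt_irrefl _ (mem_range.1 (hfree hx)))
      (fun hx => lt_irrefl _ (h.lt_of_mem_cascadeTail (by omega) hx))
  have hdisj : Disjoint τ ((Ioo i j).image c) := by
    simp only [disjoint_left, mem_image, mem_Ioo, not_exists, not_and]
    rintro x hx l ⟨hil, hlj⟩ rfl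
    exact (hτlt _ hx).not_gt (h.lt hti hil (by omega))
  have hinj : Set.InjOn c (Ioo i j) := h.strictMonoOn.injOn.mono fun l hl => by
    simp only [coe_Ioo, Set.mem_Ioo] at hl; exact ⟨by omega, by omega⟩
  rw [cascadeTail_eq_insert hij hjk, union_insert, ← union_assoc, erase_insert hcj]
  refine mem_cascadeFamily.2 ⟨j, by omega, hjk, _, hfree, ?_, rfl⟩
  rw [card_union_of_disjoint hdisj, card_image_of_injOn hinj, Nat.card_Ioo, hcard]
  omega

lemma IsCascade.shadow_cascadeFamily (h : IsCascade k t c) :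
    ∂ (cascadeFamily c t k 0) = cascadeFamily c t k 1 := by
  ext ρ
  constructor
  · rw [mem_shadow_iff]
    rintro ⟨σ, hσ, x, hx, rfl⟩
    obtain ⟨i, hti, hik, τ, hτ, hcard, rfl⟩ := mem_cascadeFamily.1 hσ
    rcases mem_union.1 hx with hx | hx
    · exact h.erase_mem_cascadeFamily_one hti hik hτ hcard hx
    · obtain ⟨j, hij, hjk, rfl⟩ := mem_cascadeTail.1 hx
      exact h.erase_apply_mem_cascadeFamily_one hti hτ hcard hij hjk
  · intro hρ
    obtain ⟨i, hti, hik, τ, hτ, hcard, rfl⟩ := mem_cascadeFamily.1 hρ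
    -- `τ` has `i - 1 < c i` elements, so some `x < c i` can be added to it
    obtain ⟨x, hxr, hxτ⟩ : ∃ x ∈ range (c i), x ∉ τ := not_subset.1 fun hsub => by
      have := card_le_card hsub
      have := h.le_apply hti hik
      have := h.one_le
      simp only [card_range] at *
      omega
    have hxtail := h.notMem_cascadeTail hti (mem_range.1 hxr)
    rw [mem_shadow_iff_insert_mem]
    refine ⟨x, by simp [hxτ, hxtail], mem_cascadeFamily.2 ⟨i, hti, hik, insert x τ,
      insert_subset hxr hτ, ?_, insert_union x τ _⟩⟩
    rw [card_insert_of_notMem hxτ, hcard]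
    have := h.one_le
    omega

end Shadow

lemma Finset.Colex.IsInitSeg.subset_of_card_le {α : Type*} [LinearOrder α]
    {𝒜 ℬ : Finset (Finset α)} {r : ℕ} (h𝒜 : IsInitSeg 𝒜 r) (hℬ : IsInitSeg ℬ r)
    (hcard : #𝒜 ≤ #ℬ) : 𝒜 ⊆ ℬ :=
  (h𝒜.total hℬ).elim id fun h => (eq_of_subset_of_card_le h hcard).ge

open Classical in
/-- The initial segment of size `r` of the colex order on `k`-subsets of `ℕ`, read off from a
cascade representation of `r` (`∅` if there is none, i.e. if `r = 0` or `k = 0`). -/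
noncomputable def colexSeg (k r : ℕ) : Finset (Finset ℕ) :=
  if h : ∃ t c, IsCascadeRep k r t c then cascadeFamily h.choose_spec.choose h.choose k 0 else ∅

section ColexSeg

open Finset.Colex

variable {k r r' t : ℕ} {c : ℕ → ℕ}

lemma colexSeg_zero : colexSeg k 0 = ∅ := dif_neg fun ⟨_, _, h⟩ => h.ne_zero rfl

lemma IsCascadeRep.card_cascadeFamily (h : IsCascadeRep k r t c) :
    #(cascadeFamily c t k 0) = r := by
  simpa [h.isCascade.card_cascadeFamily] using h.2.2.2.2.symm

lemma IsCascadeRep.isInitSeg_cascadeFamily (h : IsCascadeRep k r t c) :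
    IsInitSeg (cascadeFamily c t k 0) k := by
  simpa using h.isCascade.isInitSeg_cascadeFamily zero_le_one

lemma isInitSeg_colexSeg (k r : ℕ) : IsInitSeg (colexSeg k r) k := by
  unfold colexSeg
  split_ifs with h
  exacts [h.choose_spec.choose_spec.isInitSeg_cascadeFamily, isInitSeg_empty]

lemma IsCascadeRep.cascadeFamily_eq_colexSeg (h : IsCascadeRep k r t c) :
    cascadeFamily c t k 0 = colexSeg k r := by
  have hex : ∃ t c, IsCascadeRep k r t c := ⟨t, c, h⟩
  have h' := hex.choose_spec.choose_spec
  have hcard := h.card_cascadeFamily.trans h'.card_cascadeFamily.symm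
  rw [colexSeg, dif_pos hex]
  exact (h.isInitSeg_cascadeFamily.subset_of_card_le h'.isInitSeg_cascadeFamily hcard.le).antisymm
    (h'.isInitSeg_cascadeFamily.subset_of_card_le h.isInitSeg_cascadeFamily hcard.ge)

lemma card_colexSeg (hk : 1 ≤ k) (r : ℕ) : #(colexSeg k r) = r := by
  obtain rfl | hr := eq_or_ne r 0
  · rw [colexSeg_zero, card_empty]
  · obtain ⟨t, c, h⟩ := exists_isCascadeRep hk hr
    rw [← h.cascadeFamily_eq_colexSeg, h.card_cascadeFamily]

lemma colexSeg_mono (hk : 1 ≤ k) (h : r ≤ r') : colexSeg k r ⊆ colexSeg k r' :=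
  (isInitSeg_colexSeg k r).subset_of_card_le (isInitSeg_colexSeg k r')
    (by rwa [card_colexSeg hk, card_colexSeg hk])

lemma colexSeg_one (r : ℕ) : colexSeg 1 r = powersetCard 1 (range r) := by
  obtain rfl | hr := eq_or_ne r 0
  · rw [colexSeg_zero, range_zero, powersetCard_eq_empty.2 (by simp)]
  · have h : IsCascadeRep 1 r 1 (fun _ => r) :=
      ⟨le_rfl, le_rfl, fun _ _ _ => by omega, Nat.one_le_iff_ne_zero.2 hr, by simp⟩
    rw [← h.cascadeFamily_eq_colexSeg]
    ext σ
    simp [cascadeFamily, cascadeTail_self]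

lemma IsCascadeRep.card_shadow_colexSeg (h : IsCascadeRep k r t c) :
    #(∂ (colexSeg k r)) = ∑ i ∈ Icc t k, (c i).choose (i - 1) := by
  rw [← h.cascadeFamily_eq_colexSeg, h.isCascade.shadow_cascadeFamily,
    h.isCascade.card_cascadeFamily]

lemma partialShadow_eq_card_shadow_colexSeg (hk : 1 ≤ k) (r : ℕ) :
    partialShadow k r = #(∂ (colexSeg k r)) := by
  rw [partialShadow, cascadeVal]
  obtain rfl | hr := eq_or_ne r 0
  · rw [colexSeg_zero, shadow_empty, card_empty]
    convert Nat.sInf_empty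
    exact Set.eq_empty_of_forall_notMem fun _ ⟨_, _, h, _⟩ => h.ne_zero rfl
  · -- every cascade representation of `r` yields the value `#(∂ (colexSeg k r))`
    obtain ⟨t, c, h⟩ := exists_isCascadeRep hk hr
    rw [← csInf_singleton #(∂ (colexSeg k r))]
    congr 1
    ext s
    constructor
    · rintro ⟨t', c', h', rfl⟩
      exact h'.card_shadow_colexSeg.symm
    · rintro rfl
      exact ⟨t, c, h, h.card_shadow_colexSeg⟩

lemma partialShadow_mono (hk : 1 ≤ k) (h : r ≤ r') : partialShadow k r ≤ partialShadow k r' := by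
  rw [partialShadow_eq_card_shadow_colexSeg hk, partialShadow_eq_card_shadow_colexSeg hk]
  exact card_le_card (shadow_mono (colexSeg_mono hk h))

lemma isInitSeg_shadow_colexSeg (k r : ℕ) : IsInitSeg (∂ (colexSeg (k + 1) r)) k := by
  unfold colexSeg
  split_ifs with h
  · have hc := h.choose_spec.choose_spec.isCascade
    simpa [hc.shadow_cascadeFamily] using hc.isInitSeg_cascadeFamily le_rfl
  · simp

lemma shadow_colexSeg_subset (hk : 1 ≤ k) (h : partialShadow (k + 1) r ≤ r') :
    ∂ (colexSeg (k + 1) r) ⊆ colexSeg k r' :=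
  (isInitSeg_shadow_colexSeg k r).subset_of_card_le (isInitSeg_colexSeg k r') <| by
    rwa [card_colexSeg hk, ← partialShadow_eq_card_shadow_colexSeg (by omega)]

end ColexSeg

section KruskalKatona

open Finset.Colex

lemma shadow_map_mapEmbedding {α β : Type*} [DecidableEq α] [DecidableEq β] (f : α ↪ β)
    (𝒜 : Finset (Finset α)) :
    ∂ (𝒜.map (mapEmbedding f).toEmbedding) = (∂ 𝒜).map (mapEmbedding f).toEmbedding := by
  ext t
  simp only [mem_shadow_iff, mem_map, RelEmbedding.coe_toEmbedding, mapEmbedding_apply]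
  constructor
  · rintro ⟨_, ⟨s, hs, rfl⟩, _, hb, rfl⟩
    obtain ⟨a, ha, rfl⟩ := mem_map.1 hb
    exact ⟨s.erase a, ⟨s, hs, a, ha, rfl⟩, map_erase f s a⟩
  · rintro ⟨_, ⟨s, hs, a, ha, rfl⟩, rfl⟩
    exact ⟨s.map f, ⟨s, hs, rfl⟩, f a, mem_map_of_mem f ha, (map_erase f s a).symm⟩

lemma exists_map_valEmbedding_eq {N : ℕ} {𝒜 : Finset (Finset ℕ)}
    (h𝒜 : ∀ s ∈ 𝒜, s ⊆ range N) :
    ∃ 𝒜' : Finset (Finset (Fin N)), 𝒜'.map (mapEmbedding Fin.valEmbedding).toEmbedding = 𝒜 := by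
  have hrange : range N = (univ : Finset (Fin N)).map Fin.valEmbedding := by
    rw [Fin.map_valEmbedding_univ, Nat.Iio_eq_range]
  obtain ⟨𝒜', -, h⟩ := subset_map_iff.1
      (show 𝒜 ⊆ univ.map (mapEmbedding Fin.valEmbedding).toEmbedding from fun s hs => by
        obtain ⟨s', -, rfl⟩ := subset_map_iff.1 (hrange ▸ h𝒜 s hs)
        exact mem_map_of_mem _ (mem_univ s'))
  exact ⟨𝒜', h.symm⟩

theorem kruskal_katona_nat {r : ℕ} {𝒜 𝒞 : Finset (Finset ℕ)} (h𝒜 : (𝒜 : Set (Finset ℕ)).Sized r)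
    (h𝒞𝒜 : #𝒞 ≤ #𝒜) (h𝒞 : IsInitSeg 𝒞 r) : #(∂ 𝒞) ≤ #(∂ 𝒜) := by
  set N := (𝒜 ∪ 𝒞).sup (fun s => s.sup id) + 1
  have hN : ∀ s ∈ 𝒜 ∪ 𝒞, s ⊆ range N := fun s hs x hx => mem_range.2 <|
    Nat.lt_succ_of_le ((le_sup (f := id) hx).trans (le_sup (f := fun s => s.sup id) hs))
  clear_value N
  set E := (mapEmbedding (Fin.valEmbedding (n := N))).toEmbedding
  obtain ⟨𝒜', rfl⟩ := exists_map_valEmbedding_eq fun s hs => hN s (mem_union_left _ hs)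
  obtain ⟨𝒞', rfl⟩ := exists_map_valEmbedding_eq fun s hs => hN s (mem_union_right _ hs)
  have hE : ∀ s, E s = s.image Fin.val := fun s => by simp [E, map_eq_image]
  have h𝒜' : (𝒜' : Set (Finset (Fin N))).Sized r := fun s hs => by
    simpa [hE, card_image_of_injective _ Fin.val_injective] using h𝒜 (mem_map_of_mem E hs)
  have h𝒞' : IsInitSeg 𝒞' r := by
    refine ⟨fun s hs => ?_, fun s t hs ⟨hlt, hcard⟩ => ?_⟩
    · simpa [hE, card_image_of_injective _ Fin.val_injective] using h𝒞.1 (mem_map_of_mem E hs)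
    · have hlt' := (toColex_image_lt_toColex_image Fin.val_strictMono).2 hlt
      have := h𝒞.2 (mem_map_of_mem E hs)
        ⟨by rwa [hE], by rwa [card_image_of_injective _ Fin.val_injective]⟩
      rw [← hE] at this
      exact (mem_map' E).1 this
  rw [shadow_map_mapEmbedding, shadow_map_mapEmbedding, card_map, card_map]
  rw [card_map, card_map] at h𝒞𝒜
  exact kruskal_katona h𝒜' h𝒞𝒜 h𝒞'

lemma partialShadow_card_le_card_shadow {k : ℕ} (hk : 1 ≤ k) {𝒜 : Finset (Finset ℕ)}
    (h𝒜 : (𝒜 : Set (Finset ℕ)).Sized k) : partialShadow k #𝒜 ≤ #(∂ 𝒜) := by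
  rw [partialShadow_eq_card_shadow_colexSeg hk]
  exact kruskal_katona_nat h𝒜 (card_colexSeg hk _).le (isInitSeg_colexSeg k _)

end KruskalKatona

/-- The recursion defining `a` and `b` in the theorem, reindexed by `k + 1 ↦ k`. -/
structure RelKKSequences (d : ℕ) (f a b : ℕ → ℕ) : Prop where
  top_a : a (d - 1) = f (d - 1)
  top_b : b (d - 1) = 0
  step : ∀ k, k + 1 < d →
    a k = max (partialShadow (k + 2) (a (k + 1))) (f k + partialShadow (k + 2) (b (k + 1))) ∧
    b k = max (partialShadow (k + 2) (b (k + 1))) (partialShadow (k + 2) (a (k + 1)) - f k)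

namespace RelKKSequences

variable {d : ℕ} {f a b : ℕ → ℕ} (h : RelKKSequences d f a b)
include h

lemma add_eq {k : ℕ} (hk : k ≤ d - 1) : a k = f k + b k := by
  induction hk using Nat.decreasingInduction with
  | self => rw [h.top_a, h.top_b, add_zero]
  | of_succ k hk ih =>
    have := partialShadow_mono (k := k + 2) (by omega) (show b (k + 1) ≤ a (k + 1) by omega)
    obtain ⟨ha, hb⟩ := h.step k (by omega)
    omega

lemma partialShadow_a_le {k : ℕ} (hk : k + 1 < d) : partialShadow (k + 2) (a (k + 1)) ≤ a k :=
  (h.step k hk).1 ▸ le_max_left _ _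

lemma partialShadow_b_le {k : ℕ} (hk : k + 1 < d) : partialShadow (k + 2) (b (k + 1)) ≤ b k :=
  (h.step k hk).2 ▸ le_max_left _ _

lemma le_of_add_eq {x y : ℕ → ℕ} (hd : 1 ≤ d) (hxy : ∀ k < d, x k = f k + y k)
    (hx : ∀ k, partialShadow (k + 2) (x (k + 1)) ≤ x k)
    (hy : ∀ k, partialShadow (k + 2) (y (k + 1)) ≤ y k) {k : ℕ} (hk : k ≤ d - 1) :
    a k ≤ x k ∧ b k ≤ y k := by
  induction hk using Nat.decreasingInduction with
  | self => have := hxy (d - 1) (by omega); rw [h.top_a, h.top_b]; omega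
  | of_succ k hk ih =>
    have ha := (partialShadow_mono (by omega) ih.1).trans (hx k)
    have hb := (partialShadow_mono (by omega) ih.2).trans (hy k)
    have := hxy k (by omega)
    obtain ⟨ha', hb'⟩ := h.step k (by omega)
    omega

end RelKKSequences

section Complexes

variable {n : ℕ} {Δ : Set (Finset ℕ)}

open Classical in
noncomputable def faceLayer (Δ : Set (Finset ℕ)) (n j : ℕ) : Finset (Finset ℕ) :=
  (powersetCard j (Icc 1 n)).filter (· ∈ Δ)

lemma mem_faceLayer {j : ℕ} {σ : Finset ℕ} :
    σ ∈ faceLayer Δ n j ↔ (σ ⊆ Icc 1 n ∧ #σ = j) ∧ σ ∈ Δ := by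
  classical
  simp [faceLayer]

lemma SimplicialOn.faceCount_eq_card_faceLayer (hΔ : SimplicialOn n Δ) (j : ℕ) :
    faceCount Δ j = #(faceLayer Δ n j) := by
  rw [faceCount, ← Set.ncard_coe_finset]
  congr 1
  ext σ
  simp only [mem_coe, mem_faceLayer, Set.mem_sep_iff]
  exact ⟨fun h => ⟨⟨hΔ.1 σ h.1, h.2⟩, h.1⟩, fun h => ⟨h.2, h.1.2⟩⟩

lemma SimplicialOn.shadow_faceLayer_subset (hΔ : SimplicialOn n Δ) (j : ℕ) :
    ∂ (faceLayer Δ n (j + 1)) ⊆ faceLayer Δ n j := by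
  intro τ hτ
  obtain ⟨σ, hσ, x, hx, rfl⟩ := mem_shadow_iff.1 hτ
  obtain ⟨⟨hσn, hσj⟩, hσΔ⟩ := mem_faceLayer.1 hσ
  exact mem_faceLayer.2 ⟨⟨(erase_subset x σ).trans hσn, by rw [card_erase_of_mem hx, hσj]; rfl⟩,
    hΔ.2 σ hσΔ _ (erase_subset x σ)⟩

lemma SimplicialOn.partialShadow_faceCount_le (hΔ : SimplicialOn n Δ) (j : ℕ) :
    partialShadow (j + 1) (faceCount Δ (j + 1)) ≤ faceCount Δ j := by
  rw [hΔ.faceCount_eq_card_faceLayer, hΔ.faceCount_eq_card_faceLayer]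
  exact (partialShadow_card_le_card_shadow (by omega) fun σ hσ => (mem_faceLayer.1 hσ).1.2).trans
    (card_le_card (hΔ.shadow_faceLayer_subset j))

lemma SimplicialOn.faceCount_one_le (hΔ : SimplicialOn n Δ) : faceCount Δ 1 ≤ n := by
  rw [hΔ.faceCount_eq_card_faceLayer]
  calc #(faceLayer Δ n 1) ≤ #(powersetCard 1 (Icc 1 n)) :=
        card_le_card fun σ hσ => mem_powersetCard.2 (mem_faceLayer.1 hσ).1
    _ = n := by simp

end Complexes

lemma mem_layer_of_subset {α : Type*} [DecidableEq α] {L : ℕ → Finset (Finset α)}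
    (hL : ∀ j, ∂ (L (j + 1)) ⊆ L j) {σ τ : Finset α} (hσ : σ ∈ L #σ) (hτσ : τ ⊆ σ) :
    τ ∈ L #τ := by
  obtain ⟨m, hm⟩ : ∃ m, #σ = #τ + m := ⟨_, (Nat.add_sub_of_le (card_le_card hτσ)).symm⟩
  induction m generalizing σ with
  | zero => rwa [eq_of_subset_of_card_le hτσ hm.le]
  | succ m ih =>
    obtain ⟨x, hxσ, hxτ⟩ := not_subset.1 fun h : σ ⊆ τ => by have := card_le_card h; omega
    have hcard : #σ = #(σ.erase x) + 1 := (card_erase_add_one hxσ).symm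
    refine ih (hL _ (hcard ▸ erase_mem_shadow hσ hxσ)) (subset_erase.2 ⟨hτσ, hxτ⟩) ?_
    rw [card_erase_of_mem hxσ]
    omega

/-- The `(j + 1)`-element faces of `segComplex d g`: for `j < d`, the first `g j` many
`(j + 1)`-subsets of `{1, 2, …}` in colex order. -/
noncomputable def segLayer (d : ℕ) (g : ℕ → ℕ) : ℕ → Finset (Finset ℕ)
  | 0 => {∅}
  | j + 1 =>
    if j < d then (colexSeg (j + 1) (g j)).map (mapEmbedding (addRightEmbedding 1)).toEmbedding
    else ∅

def segComplex (d : ℕ) (g : ℕ → ℕ) : Set (Finset ℕ) := {σ | σ ∈ segLayer d g #σ}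

section SegComplex

variable {d n : ℕ} {g g' : ℕ → ℕ}

lemma segLayer_succ (j : ℕ) : segLayer d g (j + 1) = if j < d then
    (colexSeg (j + 1) (g j)).map (mapEmbedding (addRightEmbedding 1)).toEmbedding else ∅ :=
  rfl

lemma card_of_mem_segLayer {j : ℕ} {σ : Finset ℕ} (hσ : σ ∈ segLayer d g j) : #σ = j := by
  cases j with
  | zero => simpa [segLayer] using hσ
  | succ j =>
    rw [segLayer_succ] at hσ
    split_ifs at hσ
    · obtain ⟨s, hs, rfl⟩ := mem_map.1 hσ
      simpa using (isInitSeg_colexSeg (j + 1) (g j)).1 hs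
    · simp at hσ

lemma card_segLayer {k : ℕ} (hk : k < d) : #(segLayer d g (k + 1)) = g k := by
  simp [segLayer, hk, card_colexSeg]

lemma segLayer_eq_empty {k : ℕ} (hk : d ≤ k) : segLayer d g (k + 1) = ∅ := by
  simp [segLayer, hk]

lemma faceCount_segComplex (j : ℕ) : faceCount (segComplex d g) j = #(segLayer d g j) := by
  rw [faceCount, ← Set.ncard_coe_finset]
  congr 1
  ext σ
  simp only [segComplex, Set.mem_ofPred, mem_coe]
  exact ⟨fun ⟨hσ, hj⟩ => hj ▸ hσ, fun hσ => ⟨(card_of_mem_segLayer hσ).symm ▸ hσ,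
    card_of_mem_segLayer hσ⟩⟩

lemma empty_mem_segComplex : ∅ ∈ segComplex d g := by simp [segComplex, segLayer]

lemma segComplex_subset (hg : ∀ k < d, g k ≤ g' k) : segComplex d g ⊆ segComplex d g' := by
  intro σ hσ
  simp only [segComplex, Set.mem_ofPred] at hσ ⊢
  cases h : #σ with
  | zero => rw [h] at hσ; exact hσ
  | succ j =>
    rw [h, segLayer_succ] at hσ
    rw [segLayer_succ]
    split_ifs at hσ ⊢ with hj
    · exact map_subset_map.2 (colexSeg_mono (by omega) (hg j hj)) hσ
    · simp at hσ

lemma shadow_segLayer_subset (hg : ∀ k, k + 1 < d → partialShadow (k + 2) (g (k + 1)) ≤ g k)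
    (j : ℕ) : ∂ (segLayer d g (j + 1)) ⊆ segLayer d g j := by
  cases j with
  | zero =>
    intro τ hτ
    have := Set.Sized.shadow (fun σ hσ => card_of_mem_segLayer hσ) hτ
    simpa [segLayer, card_eq_zero] using this
  | succ j =>
    by_cases hj : j + 1 < d
    · simp only [segLayer, hj, (by omega : j < d), if_true, shadow_map_mapEmbedding]
      exact map_subset_map.2 (shadow_colexSeg_subset (by omega) (hg j hj))
    · simp [segLayer, hj]

lemma simplicialOn_segComplex (hg : ∀ k, k + 1 < d → partialShadow (k + 2) (g (k + 1)) ≤ g k)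
    (hgn : g 0 ≤ n) : SimplicialOn n (segComplex d g) := by
  have hlower {σ τ : Finset ℕ} (hσ : σ ∈ segComplex d g) (hτσ : τ ⊆ σ) : τ ∈ segComplex d g :=
    mem_layer_of_subset (shadow_segLayer_subset hg) hσ hτσ
  refine ⟨fun σ hσ x hx => ?_, fun σ hσ τ hτσ => hlower hσ hτσ⟩
  have hx1 : {x} ∈ segLayer d g 1 := hlower hσ (singleton_subset_iff.2 hx)
  rw [segLayer_succ] at hx1
  split_ifs at hx1
  · obtain ⟨s, hs, hsx⟩ := mem_map.1 hx1
    rw [colexSeg_one, mem_powersetCard, card_eq_one] at hs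
    obtain ⟨⟨y, rfl⟩, hy⟩ := And.symm hs
    simp only [RelEmbedding.coe_toEmbedding, mapEmbedding_apply, map_singleton,
      addRightEmbedding_apply, singleton_inj] at hsx
    have := mem_range.1 (hy (mem_singleton_self y))
    simp only [mem_Icc]
    omega
  · simp at hx1

end SegComplex

theorem statement3_general (d : ℕ) (hd : 1 ≤ d) (f : ℕ → ℕ) (n : ℕ)
    (a b : ℕ → ℕ) (had : a (d - 1) = f (d - 1)) (hbd : b (d - 1) = 0)
    (hab : ∀ k, 1 ≤ k → k ≤ d - 1 →
      a (k - 1) = max (partialShadow (k + 1) (a k)) (f (k - 1) + partialShadow (k + 1) (b k)) ∧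
      b (k - 1) = max (partialShadow (k + 1) (b k)) (partialShadow (k + 1) (a k) - f (k - 1))) :
    (∃ Δ Γ : Set (Finset ℕ), SimplicialOn n Δ ∧ SimplicialOn n Γ ∧ Γ ⊆ Δ ∧
      ((∅ : Finset ℕ) ∈ Δ → (∅ : Finset ℕ) ∈ Γ) ∧
      (∀ k < d, faceCount Δ (k + 1) = f k + faceCount Γ (k + 1)) ∧
      (∀ k, d ≤ k → faceCount Δ (k + 1) = faceCount Γ (k + 1))) ↔ a 0 ≤ n := by
  have hrec : RelKKSequences d f a b :=
    ⟨had, hbd, fun k hk => by simpa using hab (k + 1) (by omega) (by omega)⟩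
  constructor
  · rintro ⟨Δ, Γ, hΔ, hΓ, -, -, hcount, -⟩
    have ha0 := hrec.le_of_add_eq (x := fun k => faceCount Δ (k + 1))
      (y := fun k => faceCount Γ (k + 1)) hd hcount
      (fun k => hΔ.partialShadow_faceCount_le (k + 1))
      (fun k => hΓ.partialShadow_faceCount_le (k + 1)) (Nat.zero_le _)
    exact ha0.1.trans hΔ.faceCount_one_le
  · intro h0
    have hba : ∀ k < d, b k ≤ a k := fun k hk => by rw [hrec.add_eq (by omega)]; omega
    refine ⟨segComplex d a, segComplex d b,
      simplicialOn_segComplex (fun _ => hrec.partialShadow_a_le) h0,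
      simplicialOn_segComplex (fun _ => hrec.partialShadow_b_le) ((hba 0 hd).trans h0),
      segComplex_subset hba, fun _ => empty_mem_segComplex, fun k hk => ?_, fun k hk => ?_⟩
    · rw [faceCount_segComplex, faceCount_segComplex, card_segLayer hk, card_segLayer hk]
      exact hrec.add_eq (by omega)
    · rw [faceCount_segComplex, faceCount_segComplex, segLayer_eq_empty hk, segLayer_eq_empty hk]

/-- characterization of `f`-vectors of proper relative simplicial
complexes on the ground set `[n]` (Theorem 1.2 of the paper). -/
theorem statement3 (d : ℕ) (hd : 1 ≤ d) (f : ℕ → ℕ) (n : ℕ) (hn : 1 ≤ n)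
    (a b : ℕ → ℕ) (had : a (d - 1) = f (d - 1)) (hbd : b (d - 1) = 0)
    (hab : ∀ k, 1 ≤ k → k ≤ d - 1 →
      a (k - 1) = max (partialShadow (k + 1) (a k)) (f (k - 1) + partialShadow (k + 1) (b k)) ∧
      b (k - 1) = max (partialShadow (k + 1) (b k)) (partialShadow (k + 1) (a k) - f (k - 1))) :
    (∃ Δ Γ : Set (Finset ℕ), SimplicialOn n Δ ∧ SimplicialOn n Γ ∧ Γ ⊆ Δ ∧
      ((∅ : Finset ℕ) ∈ Δ → (∅ : Finset ℕ) ∈ Γ) ∧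
      (∀ k < d, faceCount Δ (k + 1) = f k + faceCount Γ (k + 1)) ∧
      (∀ k, d ≤ k → faceCount Δ (k + 1) = faceCount Γ (k + 1))) ↔ a 0 ≤ n :=
  statement3_general d hd f n a b had hbd hab
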